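/- The rule Contraction (from E⃗,G,G ∘̸– F infer E⃗,G ∘̸– F) is uniform-constructively sound. -/

import Mathlib

namespace CoL

attribute [local instance 10] Classical.propDecidable

noncomputable section

/-! ## Players, moves, runs -/

/-- The two players: the machine `⊤` and the environment `⊥`. -/
inductive Player where
  | top
  | bot
deriving DecidableEq, Inhabited

/-- The adversary of a player. -/
def Player.opp : Player → Player
  | .top => .bot
  | .bot => .top

/-- Moves, with enough structure for choice/parallel/dfb-style prefixed moves. -/
inductive Move where
  | choice : ℕ → Move
  | par : Bool → Move → Move
  | succd : Move → Move
  | ante : List Bool → Move → Move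
  | repl : List Bool → Move
deriving DecidableEq, Inhabited

/-- A labeled move: a move together with the player who made it. -/
structure Labmove where
  player : Player
  move : Move
deriving DecidableEq, Inhabited

/-- A run: a finite or infinite sequence of labeled moves.  A position is a finite run,
represented by a `List Labmove`. -/
inductive RunT where
  | fin : List Labmove → RunT
  | inf : (ℕ → Labmove) → RunT

namespace RunT

def get : RunT → ℕ → Option Labmove
  | .fin l, n => l[n]?
  | .inf f, n => some (f n)

def take : RunT → ℕ → List Labmove
  | .fin l, n => l.take n
  | .inf f, n => (List.range n).map f

def hasPrefix (Γ : RunT) (Φ : List Labmove) : Prop := Γ.take Φ.length = Φ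

end RunT

/-- Switch the label of a labmove to the adversary's. -/
def Labmove.flip (lm : Labmove) : Labmove := ⟨lm.player.opp, lm.move⟩

def RunT.flip : RunT → RunT
  | .fin l => .fin (l.map Labmove.flip)
  | .inf f => .inf fun n => (f n).flip

theorem not_infinite_bound {P : ℕ → Prop} (h : ¬ (setOf P).Infinite) :
    ∃ N : ℕ, ∀ n, P n → n < N := by
  rw [Set.not_infinite] at h
  obtain ⟨N, hN⟩ := h.bddAbove
  exact ⟨N + 1, fun n hn => Nat.lt_succ_of_le (hN hn)⟩

/-- The subsequence of a run obtained by a partial relabeling function, with the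
surviving moves reindexed consecutively (in the original order). -/
def RunT.fmap (g : Labmove → Option Labmove) : RunT → RunT
  | .fin l => .fin (l.filterMap g)
  | .inf f =>
    if h : {n | (g (f n)).isSome = true}.Infinite then
      .inf fun k => (g (f (Nat.nth (fun n => (g (f n)).isSome = true) k))).getD default
    else
      .fin ((List.range (not_infinite_bound h).choose).filterMap fun n => g (f n))

/-- A run contains only finitely many labmoves satisfying `P`. -/
def RunT.finMany (P : Labmove → Prop) : RunT → Prop
  | .fin _ => True
  | .inf f => {n | P (f n)}.Finite

/-- The position (index) of the `k`-th (0-based) natural number satisfying `P`,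
if it exists. -/
def kthIdx (P : ℕ → Prop) (k : ℕ) : Option ℕ :=
  if h : ∃ n, P n ∧ {m | m < n ∧ P m}.ncard = k then some (Nat.find h) else none

/-! ## Constant games -/

/-- A constant game: a set of legal (finite) positions together with a winner
function on runs.  (Legality of arbitrary runs is derived: a run is legal iff all its
finite initial segments are legal positions.) -/
structure ConstGame where
  legalPos : List Labmove → Prop
  wn : RunT → Player

namespace ConstGame

/-- A run is legal iff every finite initial segment of it is a legal position. -/
def legal (A : ConstGame) (Γ : RunT) : Prop := ∀ n, A.legalPos (Γ.take n)

/-- A run is `p`-illegal iff the last move of its shortest illegal initial segment is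
`p`-labeled. -/
def illegalFor (A : ConstGame) (p : Player) (Γ : RunT) : Prop :=
  ∃ (Φ : List Labmove) (lm : Labmove),
    Γ.hasPrefix (Φ ++ [lm]) ∧ A.legalPos Φ ∧ ¬ A.legalPos (Φ ++ [lm]) ∧ lm.player = p

/-- A run is won by `p` iff it is illegal with the adversary the offender, or it is a
legal run whose winner is `p`. -/
def wonBy (A : ConstGame) (p : Player) (Γ : RunT) : Prop :=
  A.illegalFor p.opp Γ ∨ (A.legal Γ ∧ A.wn Γ = p)

end ConstGame

/-- The `n`-th entry of the run exists and is `q`-labeled. -/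
def RunT.playerAt (Γ : RunT) (q : Player) (n : ℕ) : Prop :=
  ∃ lm, Γ.get n = some lm ∧ lm.player = q

/-- Index of the `k`-th `q`-labeled move of a run. -/
def RunT.kthPlayerIdx (Γ : RunT) (q : Player) (k : ℕ) : Option ℕ := kthIdx (Γ.playerAt q) k

/-- The `k`-th `q`-labeled move of a run. -/
def RunT.kthPlayerMove (Γ : RunT) (q : Player) (k : ℕ) : Option Move :=
  (Γ.kthPlayerIdx q k).bind fun n => (Γ.get n).map Labmove.move

/-- `Δ` is a `p`-delay of `Γ`: both players' subsequences of moves agree, and whenever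
the `k`-th `p`-labeled move occurs later than the `n`-th `¬p`-labeled move in `Γ`,
so does it in `Δ`. -/
def IsDelay (p : Player) (Γ Δ : RunT) : Prop :=
  (∀ (q : Player) (k : ℕ), Γ.kthPlayerMove q k = Δ.kthPlayerMove q k) ∧
  (∀ (k n a b c d : ℕ),
    Γ.kthPlayerIdx p k = some a → Γ.kthPlayerIdx p.opp n = some b →
    Δ.kthPlayerIdx p k = some c → Δ.kthPlayerIdx p.opp n = some d →
    b < a → d < c)

/-- A constant game is static. -/
def ConstGame.Static (A : ConstGame) : Prop :=
  ∀ (p : Player) (Γ Δ : RunT), IsDelay p Γ Δ →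
    (¬ A.illegalFor p Γ → ¬ A.illegalFor p Δ) ∧ (A.wonBy p Γ → A.wonBy p Δ)

/-- Valuations: assignments of constants (natural numbers) to variables. -/
abbrev Valuation := ℕ → ℕ

/-- A game: a function from valuations to constant games. -/
abbrev Game := Valuation → ConstGame

/-- A game is static iff all of its instances are. -/
def Game.Static (A : Game) : Prop := ∀ e, (A e).Static

/-! ## Machines: EPMs and BMEPMs -/

/-- An action of an EPM at a step: make a (single) move, grant permission, or keep
computing. -/
inductive EAct where
  | move : Move → EAct
  | permit
  | think

/-- An easy-play machine, abstracted as a deterministic interactive algorithm: its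
action is a function of the valuation, the current position (run-tape content), and the
clock cycle. -/
structure EPM where
  act : Valuation → List Labmove → ℕ → EAct

/-- The position after `t` steps of a play of EPM `M` on valuation `e`, where `env t`
is the environment's (optional, single) response upon a permission granted at step
`t`. -/
def EPM.pos (M : EPM) (e : Valuation) (env : ℕ → Option Move) : ℕ → List Labmove
  | 0 => []
  | t + 1 =>
    match M.act e (M.pos e env t) t with
    | .move m => M.pos e env t ++ [⟨.top, m⟩]
    | .permit => M.pos e env t ++ (env t).toList.map fun m => ⟨.bot, m⟩
    | .think => M.pos e env t

def spelledGet (pos : ℕ → List Labmove) (n : ℕ) : Option Labmove :=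
  if h : ∃ t, n < (pos t).length then (pos (Nat.find h))[n]? else none

/-- The run incrementally spelled by a monotone sequence of positions. -/
def spelled (pos : ℕ → List Labmove) : RunT :=
  if h : ∃ t, ∀ s, (pos s).length ≤ (pos t).length then .fin (pos (Nat.find h))
  else .inf fun n => (spelledGet pos n).getD default

/-- A computation branch is fair iff permission is granted infinitely many times. -/
def EPM.Fair (M : EPM) (e : Valuation) (env : ℕ → Option Move) : Prop :=
  ∀ N, ∃ t, N ≤ t ∧ M.act e (M.pos e env t) t = .permit

/-- `M ⊨ₑ A`: machine `M` wins game `A` on valuation `e`. -/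
def EPM.WinsOn (M : EPM) (A : Game) (e : Valuation) : Prop :=
  ∀ env : ℕ → Option Move,
    ¬ (A e).illegalFor .bot (spelled (M.pos e env)) →
      M.Fair e env ∧ (A e).wonBy .top (spelled (M.pos e env))

/-- `M ⊨ A`: `M` wins `A` on every valuation. -/
def EPM.Wins (M : EPM) (A : Game) : Prop := ∀ e, M.WinsOn A e

/-- An action of a block-move EPM: make a finite block of moves, grant permission, or
keep computing. -/
inductive BAct where
  | moves : List Move → BAct
  | permit
  | think

/-- A block-move EPM: like an EPM, but either player may make a finite block of moves
at a time. -/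
structure BMEPM where
  act : Valuation → List Labmove → ℕ → BAct

def BMEPM.pos (M : BMEPM) (e : Valuation) (env : ℕ → List Move) : ℕ → List Labmove
  | 0 => []
  | t + 1 =>
    match M.act e (M.pos e env t) t with
    | .moves ms => M.pos e env t ++ ms.map fun m => ⟨.top, m⟩
    | .permit => M.pos e env t ++ (env t).map fun m => ⟨.bot, m⟩
    | .think => M.pos e env t

def BMEPM.Fair (M : BMEPM) (e : Valuation) (env : ℕ → List Move) : Prop :=
  ∀ N, ∃ t, N ≤ t ∧ M.act e (M.pos e env t) t = .permit

/-- `M ⊨ₑ A` for a BMEPM. -/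
def BMEPM.WinsOn (M : BMEPM) (A : Game) (e : Valuation) : Prop :=
  ∀ env : ℕ → List Move,
    ¬ (A e).illegalFor .bot (spelled (M.pos e env)) →
      M.Fair e env ∧ (A e).wonBy .top (spelled (M.pos e env))

def BMEPM.Wins (M : BMEPM) (A : Game) : Prop := ∀ e, M.WinsOn A e

/-- A game is computable iff some EPM wins it. -/
def Game.Computable (A : Game) : Prop := ∃ M : EPM, M.Wins A

/-! ## Game operations -/

/-- The elementary game with no nonempty legal runs, won by `⊤` iff `P` holds. -/
def elemGame (P : Prop) : ConstGame where
  legalPos Φ := Φ = []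
  wn _ := if P then .top else .bot

/-- Negation: the roles of the two players are interchanged. -/
def gNeg (A : ConstGame) : ConstGame where
  legalPos Φ := A.legalPos (Φ.map Labmove.flip)
  wn Γ := (A.wn Γ.flip).opp

def projPar (b : Bool) : Labmove → Option Labmove
  | ⟨p, .par b' β⟩ => if b' = b then some ⟨p, β⟩ else none
  | _ => none

/-- Parallel (binary) conjunction of constant games. -/
def gameAnd (A B : ConstGame) : ConstGame where
  legalPos Φ :=
    (∀ lm ∈ Φ, ∃ b β, lm.move = Move.par b β) ∧
    A.legalPos (Φ.filterMap (projPar false)) ∧ B.legalPos (Φ.filterMap (projPar true))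
  wn Γ :=
    if A.wn (Γ.fmap (projPar false)) = .top ∧ B.wn (Γ.fmap (projPar true)) = .top
    then .top else .bot

/-- Choice conjunction over an index set `S`: `⊥` chooses `n ∈ S` and play continues
in `f n`; if no choice is ever made, `⊤` wins. -/
def gameCAnd (S : Set ℕ) (f : ℕ → ConstGame) : ConstGame where
  legalPos := fun Φ =>
    match Φ with
    | [] => True
    | ⟨.bot, .choice n⟩ :: rest => n ∈ S ∧ (f n).legalPos rest
    | _ => False
  wn := fun Γ =>
    match Γ with
    | .fin [] => .top
    | .fin (⟨.bot, .choice n⟩ :: rest) => (f n).wn (.fin rest)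
    | .fin (_ :: _) => .top
    | .inf g =>
      match g 0 with
      | ⟨.bot, .choice n⟩ => (f n).wn (.inf fun k => g (k + 1))
      | _ => .top

/-- Blind universal quantification (for unistructural families of games). -/
def gameAll (f : ℕ → ConstGame) : ConstGame where
  legalPos Φ := ∀ c, (f c).legalPos Φ
  wn Γ := if ∀ c, (f c).wn Γ = .top then .top else .bot

/-! ## Trees of games and dfb-reduction -/

/-- A tree of (constant) games. -/
inductive GTree where
  | leaf : ConstGame → GTree
  | node : GTree → GTree → GTree

/-- The leaves of a tree of games, together with their (bit-string) addresses. -/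
def GTree.leaves : GTree → List (List Bool × ConstGame)
  | .leaf A => [([], A)]
  | .node l r =>
      (l.leaves.map fun p => (false :: p.1, p.2)) ++ (r.leaves.map fun p => (true :: p.1, p.2))

/-- `w` is a prefix of the infinite bit string `x`. -/
def prefInf (w : List Bool) (x : ℕ → Bool) : Prop :=
  ∀ (i : ℕ) (hi : i < w.length), w.get ⟨i, hi⟩ = x i

/-- Projection to the succedent: keep labmoves `℘S.β`, stripping the prefix. -/
def projS : Labmove → Option Labmove
  | ⟨p, .succd β⟩ => some ⟨p, β⟩
  | _ => none

/-- Projection along an infinite bit string `x`: keep labmoves `℘w.β` with `w ≼ x`,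
stripping the prefix. -/
def projA (x : ℕ → Bool) : Labmove → Option Labmove
  | ⟨p, .ante w β⟩ => if prefInf w x then some ⟨p, β⟩ else none
  | _ => none

/-- Shape/precedence conditions on the `i`-th labmove of a position of a dfb-reduction
(conditions 1-3 of the definition of dfb-reduction). -/
def dfbShape (T : GTree) (Φ : List Labmove) (i : ℕ) : Labmove → Prop
  | ⟨_, .succd _⟩ => True
  | ⟨.top, .repl w⟩ =>
      (∃ p ∈ T.leaves, p.1 = w) ∨
      (w ≠ [] ∧ ∃ j < i, Φ[j]? = some ⟨.top, .repl w.dropLast⟩)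
  | ⟨.bot, .repl _⟩ => False
  | ⟨_, .ante w _⟩ =>
      (∃ p ∈ T.leaves, w <+: p.1) ∨
      (w ≠ [] ∧ ∃ j < i, Φ[j]? = some ⟨.top, .repl w.dropLast⟩)
  | ⟨_, .choice _⟩ => False
  | ⟨_, .par _ _⟩ => False

/-- Legal positions of the dfb-reduction `T ∘̸– B`. -/
def dfbLegalPos (T : GTree) (B : ConstGame) (Φ : List Labmove) : Prop :=
  (∀ (i : ℕ) (lm : Labmove), Φ[i]? = some lm → dfbShape T Φ i lm) ∧
  (∀ w : List Bool, Φ.count ⟨Player.top, Move.repl w⟩ ≤ 1) ∧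
  B.legalPos (Φ.filterMap projS) ∧
  (∀ p ∈ T.leaves, ∀ x : ℕ → Bool, prefInf p.1 x →
      (gNeg p.2).legalPos (Φ.filterMap (projA x)))

/-- Replicative labmoves. -/
def isReplMove (lm : Labmove) : Prop := ∃ w, lm.move = Move.repl w

/-- The dfb-reduction of game `B` to the tree of games `T`.  `⊤` wins a legal run iff
it has made only finitely many replications and either wins in the succedent or wins
(as `⊥`) in some antecedental leaf. -/
def dfb (T : GTree) (B : ConstGame) : ConstGame where
  legalPos := dfbLegalPos T B
  wn Γ :=
    if Γ.finMany isReplMove ∧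
       (B.wn (Γ.fmap projS) = .top ∨
        ∃ p ∈ T.leaves, ∃ x : ℕ → Bool, prefInf p.1 x ∧
          (gNeg p.2).wn (Γ.fmap (projA x)) = .top)
    then .top else .bot

/-! ## Syntax: terms, formulas, sequents -/

/-- Function symbols: an arity and an index (infinitely many of each arity). -/
structure FuncSym where
  ar : ℕ
  idx : ℕ
deriving DecidableEq

/-- Predicate symbols: the logical symbol `=` plus infinitely many nonlogical symbols
of each arity. -/
inductive PredSym where
  | eq
  | pred : ℕ → ℕ → PredSym
deriving DecidableEq

def PredSym.arity : PredSym → ℕ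
  | .eq => 2
  | .pred n _ => n

/-- Terms: variables, constants (decimal numerals, i.e. natural numbers), and
applications of function symbols. -/
inductive Term where
  | var : ℕ → Term
  | const : ℕ → Term
  | func : (f : FuncSym) → (Fin f.ar → Term) → Term

/-- Formulas.  `¬` is only applied to atoms: an atom carries a polarity bit
(`true` = negated).  `→` is an abbreviation (see `Fml.imp`). -/
inductive Fml where
  | tt
  | ff
  | atom : Bool → (p : PredSym) → (Fin p.arity → Term) → Fml
  | and : Fml → Fml → Fml
  | or : Fml → Fml → Fml
  | cand : Fml → Fml → Fml
  | cor : Fml → Fml → Fml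
  | all : ℕ → Fml → Fml
  | ex : ℕ → Fml → Fml
  | call : ℕ → Fml → Fml
  | cex : ℕ → Fml → Fml

def duo {α : Sort*} (a b : α) : Fin 2 → α := fun i => if i.val = 0 then a else b

/-- An interpretation: sends function symbols to functions on `ℕ` and predicate symbols
to elementary games (predicates), such that `=` is interpreted as an equivalence
relation preserved by all interpreted functions and respected by all interpreted
predicates. -/
structure Interp where
  fn : (f : FuncSym) → (Fin f.ar → ℕ) → ℕ
  pr : (p : PredSym) → (Fin p.arity → ℕ) → Prop
  eq_equiv : Equivalence fun a b => pr .eq (duo a b)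
  fn_congr : ∀ (f : FuncSym) (u v : Fin f.ar → ℕ),
      (∀ i, pr .eq (duo (u i) (v i))) → pr .eq (duo (fn f u) (fn f v))
  pr_congr : ∀ (p : PredSym) (u v : Fin p.arity → ℕ),
      (∀ i, pr .eq (duo (u i) (v i))) → (pr p u ↔ pr p v)

def Term.eval (I : Interp) (e : Valuation) : Term → ℕ
  | .var x => e x
  | .const c => c
  | .func f ts => I.fn f fun i => (ts i).eval I e

def Valuation.upd (e : Valuation) (x c : ℕ) : Valuation := fun y => if y = x then c else e y

/-- The game `F*` represented by a formula `F` under an interpretation `*`. -/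
def Fml.game (I : Interp) : Fml → Valuation → ConstGame
  | .tt, _ => elemGame True
  | .ff, _ => elemGame False
  | .atom b p a, e => elemGame ((I.pr p fun i => (a i).eval I e) ↔ b = false)
  | .and A B, e => gameAnd (A.game I e) (B.game I e)
  | .or A B, e => gNeg (gameAnd (gNeg (A.game I e)) (gNeg (B.game I e)))
  | .cand A B, e => gameCAnd {n | n = 0 ∨ n = 1} fun n =>
      if n = 0 then A.game I e else B.game I e
  | .cor A B, e => gNeg (gameCAnd {n | n = 0 ∨ n = 1} fun n =>
      gNeg (if n = 0 then A.game I e else B.game I e))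
  | .all x A, e => gameAll fun c => A.game I (e.upd x c)
  | .ex x A, e => gNeg (gameAll fun c => gNeg (A.game I (e.upd x c)))
  | .call x A, e => gameCAnd Set.univ fun c => A.game I (e.upd x c)
  | .cex x A, e => gNeg (gameCAnd Set.univ fun c => gNeg (A.game I (e.upd x c)))

/-- A sequent `E₁,…,Eₙ ∘̸– F` with a list antecedent (standard-tree form). -/
structure Sequent where
  ante : List Fml
  succ : Fml

/-- The standard (right-nested) tree with the given yield. -/
def stdGTree (A : ConstGame) : List ConstGame → GTree
  | [] => .leaf A
  | B :: rest => .node (.leaf A) (stdGTree B rest)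

/-- The game represented by a sequent: the dfb-reduction of the succedent to the
standard tree of the antecedent (the succedent itself if the antecedent is empty). -/
def Sequent.game (I : Interp) (S : Sequent) : Game := fun e =>
  match S.ante with
  | [] => S.succ.game I e
  | E :: rest => dfb (stdGTree (E.game I e) (rest.map fun G => G.game I e)) (S.succ.game I e)

/-! ## Uniform-constructive soundness of rules -/

/-- A rule (a relation between lists of premise sequents and conclusion sequents) is
uniform-constructively sound iff there is an (effective) procedure turning machines
winning the premises under an interpretation into a machine winning the conclusion
under the same interpretation. -/
def UCSound (R : List Sequent → Sequent → Prop) : Prop :=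
  ∃ F : List Sequent → Sequent → List BMEPM → BMEPM,
    ∀ (Xs : List Sequent) (X0 : Sequent) (Ms : List BMEPM),
      R Xs X0 → Ms.length = Xs.length →
      ∀ (I : Interp) (e : Valuation),
        (∀ (i : ℕ) (hx : i < Xs.length) (hm : i < Ms.length),
            (Ms[i]'hm).WinsOn ((Xs[i]'hx).game I) e) →
        (F Xs X0 Ms).WinsOn (X0.game I) e

/-! ## Trees of formulas and general sequents -/

/-- A (nonempty) tree of formulas. -/
inductive FTree where
  | leaf : Fml → FTree
  | node : FTree → FTree → FTree

/-- The yield of a tree of formulas. -/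
def FTree.yield : FTree → List Fml
  | .leaf F => [F]
  | .node l r => l.yield ++ r.yield

def FTree.toGTree (I : Interp) (e : Valuation) : FTree → GTree
  | .leaf F => .leaf (F.game I e)
  | .node l r => .node (l.toGTree I e) (r.toGTree I e)

/-- A sequent whose antecedent is an arbitrary (possibly empty) tree of formulas. -/
structure TSeq where
  ante : Option FTree
  succ : Fml

def TSeq.game (I : Interp) (S : TSeq) : Game := fun e =>
  match S.ante with
  | none => S.succ.game I e
  | some T => dfb (T.toGTree I e) (S.succ.game I e)

def stdFTree1 (F : Fml) : List Fml → FTree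
  | [] => .leaf F
  | G :: rest => .node (.leaf F) (stdFTree1 G rest)

/-- The standard tree of formulas with a given yield. -/
def stdFTree : List Fml → Option FTree
  | [] => none
  | F :: rest => some (stdFTree1 F rest)

/-- Uniform-constructive soundness, for rules on tree-antecedent sequents. -/
def UCSoundT (R : List TSeq → TSeq → Prop) : Prop :=
  ∃ F : List TSeq → TSeq → List BMEPM → BMEPM,
    ∀ (Xs : List TSeq) (X0 : TSeq) (Ms : List BMEPM),
      R Xs X0 → Ms.length = Xs.length →
      ∀ (I : Interp) (e : Valuation),
        (∀ (i : ℕ) (hx : i < Xs.length) (hm : i < Ms.length),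
            (Ms[i]'hm).WinsOn ((Xs[i]'hx).game I) e) →
        (F Xs X0 Ms).WinsOn (X0.game I) e

/-! ## Substitution, occurrences -/

def Term.subst : Term → ℕ → Term → Term
  | .var y, x, t => if y = x then t else .var y
  | .const d, _, _ => .const d
  | .func f ts, x, t => .func f fun i => (ts i).subst x t

/-- Replace all free occurrences of variable `x` by term `t`. -/
def Fml.subst (x : ℕ) (t : Term) : Fml → Fml
  | .tt => .tt
  | .ff => .ff
  | .atom b p a => .atom b p fun i => (a i).subst x t
  | .and A B => .and (A.subst x t) (B.subst x t)
  | .or A B => .or (A.subst x t) (B.subst x t)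
  | .cand A B => .cand (A.subst x t) (B.subst x t)
  | .cor A B => .cor (A.subst x t) (B.subst x t)
  | .all y A => .all y (if y = x then A else A.subst x t)
  | .ex y A => .ex y (if y = x then A else A.subst x t)
  | .call y A => .call y (if y = x then A else A.subst x t)
  | .cex y A => .cex y (if y = x then A else A.subst x t)

def Term.hasVar (y : ℕ) : Term → Prop
  | .var x => x = y
  | .const _ => False
  | .func _ ts => ∃ i, (ts i).hasVar y

/-- `y` occurs (free, bound or as a binder) in the formula. -/
def Fml.mentionsVar (y : ℕ) : Fml → Prop
  | .tt => False
  | .ff => False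
  | .atom _ _ a => ∃ i, (a i).hasVar y
  | .and A B => A.mentionsVar y ∨ B.mentionsVar y
  | .or A B => A.mentionsVar y ∨ B.mentionsVar y
  | .cand A B => A.mentionsVar y ∨ B.mentionsVar y
  | .cor A B => A.mentionsVar y ∨ B.mentionsVar y
  | .all x A => x = y ∨ A.mentionsVar y
  | .ex x A => x = y ∨ A.mentionsVar y
  | .call x A => x = y ∨ A.mentionsVar y
  | .cex x A => x = y ∨ A.mentionsVar y

/-- `y` occurs as a bound variable (i.e. is used as a binder) in the formula. -/
def Fml.bindsVar (y : ℕ) : Fml → Prop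
  | .tt => False
  | .ff => False
  | .atom _ _ _ => False
  | .and A B => A.bindsVar y ∨ B.bindsVar y
  | .or A B => A.bindsVar y ∨ B.bindsVar y
  | .cand A B => A.bindsVar y ∨ B.bindsVar y
  | .cor A B => A.bindsVar y ∨ B.bindsVar y
  | .all x A => x = y ∨ A.bindsVar y
  | .ex x A => x = y ∨ A.bindsVar y
  | .call x A => x = y ∨ A.bindsVar y
  | .cex x A => x = y ∨ A.bindsVar y

/-- `y` occurs free in the formula. -/
def Fml.freeVar (y : ℕ) : Fml → Prop
  | .tt => False
  | .ff => False
  | .atom _ _ a => ∃ i, (a i).hasVar y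
  | .and A B => A.freeVar y ∨ B.freeVar y
  | .or A B => A.freeVar y ∨ B.freeVar y
  | .cand A B => A.freeVar y ∨ B.freeVar y
  | .cor A B => A.freeVar y ∨ B.freeVar y
  | .all x A => x ≠ y ∧ A.freeVar y
  | .ex x A => x ≠ y ∧ A.freeVar y
  | .call x A => x ≠ y ∧ A.freeVar y
  | .cex x A => x ≠ y ∧ A.freeVar y

def Sequent.mentionsVar (S : Sequent) (y : ℕ) : Prop :=
  (∃ E ∈ S.ante, E.mentionsVar y) ∨ S.succ.mentionsVar y

def Sequent.bindsVar (S : Sequent) (y : ℕ) : Prop :=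
  (∃ E ∈ S.ante, E.bindsVar y) ∨ S.succ.bindsVar y

/-! ## Elementarization, classical semantics, stability -/

/-- A formula is elementary iff it contains no choice operators. -/
def Fml.elementary : Fml → Prop
  | .tt => True
  | .ff => True
  | .atom _ _ _ => True
  | .and A B => A.elementary ∧ B.elementary
  | .or A B => A.elementary ∧ B.elementary
  | .cand _ _ => False
  | .cor _ _ => False
  | .all _ A => A.elementary
  | .ex _ A => A.elementary
  | .call _ _ => False
  | .cex _ _ => False

/-- The elementarization of a formula: replace all `⊔`/`⊔x`-subformulas by `⊥` and all
`⊓`/`⊓x`-subformulas by `⊤`. -/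
def Fml.elz : Fml → Fml
  | .tt => .tt
  | .ff => .ff
  | .atom b p a => .atom b p a
  | .and A B => .and A.elz B.elz
  | .or A B => .or A.elz B.elz
  | .cand _ _ => .tt
  | .cor _ _ => .ff
  | .all x A => .all x A.elz
  | .ex x A => .ex x A.elz
  | .call _ _ => .tt
  | .cex _ _ => .ff

/-- Standard (DeMorgan) negation of a formula. -/
def Fml.negF : Fml → Fml
  | .tt => .ff
  | .ff => .tt
  | .atom b p a => .atom (!b) p a
  | .and A B => .or A.negF B.negF
  | .or A B => .and A.negF B.negF
  | .cand A B => .cor A.negF B.negF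
  | .cor A B => .cand A.negF B.negF
  | .all x A => .ex x A.negF
  | .ex x A => .all x A.negF
  | .call x A => .cex x A.negF
  | .cex x A => .call x A.negF

/-- Implication as the standard abbreviation. -/
def Fml.imp (A B : Fml) : Fml := .or A.negF B

def bigAnd : Fml → List Fml → Fml
  | A, [] => A
  | A, B :: rest => .and A (bigAnd B rest)

/-- The elementarization of a sequent `G₁,…,Gₙ ∘̸– F`:
the elementary formula `‖G₁‖∧…∧‖Gₙ‖ → ‖F‖`. -/
def Sequent.elz (S : Sequent) : Fml :=
  match S.ante with
  | [] => S.succ.elz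
  | E :: rest => (bigAnd E.elz (rest.map Fml.elz)).imp S.succ.elz

/-- A classical first-order structure (with `=` interpreted as identity). -/
structure Struc where
  D : Type
  ne : Nonempty D
  cn : ℕ → D
  fn : (f : FuncSym) → (Fin f.ar → D) → D
  pr : (p : PredSym) → (Fin p.arity → D) → Prop
  eq_iden : ∀ a b : D, pr .eq (duo a b) ↔ a = b

def Term.evalS (St : Struc) (e : ℕ → St.D) : Term → St.D
  | .var x => e x
  | .const c => St.cn c
  | .func f ts => St.fn f fun i => (ts i).evalS St e

/-- Classical (Tarskian) truth of a formula in a structure under an assignment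
(choice operators are read classically; they do not occur in elementary formulas). -/
def Fml.trueIn (St : Struc) : Fml → (ℕ → St.D) → Prop
  | .tt, _ => True
  | .ff, _ => False
  | .atom b p a, e => ((St.pr p fun i => (a i).evalS St e) ↔ b = false)
  | .and A B, e => A.trueIn St e ∧ B.trueIn St e
  | .or A B, e => A.trueIn St e ∨ B.trueIn St e
  | .cand A B, e => A.trueIn St e ∧ B.trueIn St e
  | .cor A B, e => A.trueIn St e ∨ B.trueIn St e
  | .all x A, e => ∀ d, A.trueIn St fun y => if y = x then d else e y
  | .ex x A, e => ∃ d, A.trueIn St fun y => if y = x then d else e y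
  | .call x A, e => ∀ d, A.trueIn St fun y => if y = x then d else e y
  | .cex x A, e => ∃ d, A.trueIn St fun y => if y = x then d else e y

/-- Classical validity (= provability in classical predicate calculus with `=`, by
Gödel's completeness theorem). -/
def FValid (F : Fml) : Prop := ∀ (St : Struc) (e : ℕ → St.D), F.trueIn St e

/-- A sequent is stable iff its elementarization is classically valid. -/
def Sequent.stable (S : Sequent) : Prop := FValid S.elz

/-! ## The system CL12 -/

/-- Surface contexts: a formula with a hole not in the scope of any choice operator. -/
inductive FCtx where
  | hole
  | andL : FCtx → Fml → FCtx
  | andR : Fml → FCtx → FCtx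
  | orL : FCtx → Fml → FCtx
  | orR : Fml → FCtx → FCtx
  | allC : ℕ → FCtx → FCtx
  | exC : ℕ → FCtx → FCtx

def FCtx.fill : FCtx → Fml → Fml
  | .hole, H => H
  | .andL C B, H => .and (C.fill H) B
  | .andR A C, H => .and A (C.fill H)
  | .orL C B, H => .or (C.fill H) B
  | .orR A C, H => .or A (C.fill H)
  | .allC x C, H => .all x (C.fill H)
  | .exC x C, H => .ex x (C.fill H)

/-- `t` is a constant or a variable with no bound occurrences in the premise. -/
def TermOk (t : Term) (prem : Sequent) : Prop :=
  (∃ c, t = Term.const c) ∨ (∃ y, t = Term.var y ∧ ¬ prem.bindsVar y)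

/-- The single-premise rules of CL12: `⊓`-Choose, `⊔`-Choose, `⊓x`-Choose,
`⊔x`-Choose and Replicate.  `NonWaitStep Y X` means `X` follows from premise `Y`. -/
inductive NonWaitStep : Sequent → Sequent → Prop
  | candChoose (G K : List Fml) (C : FCtx) (H0 H1 : Fml) (i : Bool) (F : Fml) :
      NonWaitStep ⟨G ++ (C.fill (if i then H1 else H0)) :: K, F⟩
                  ⟨G ++ (C.fill (.cand H0 H1)) :: K, F⟩
  | corChoose (G : List Fml) (C : FCtx) (H0 H1 : Fml) (i : Bool) :
      NonWaitStep ⟨G, C.fill (if i then H1 else H0)⟩ ⟨G, C.fill (.cor H0 H1)⟩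
  | callChoose (G K : List Fml) (C : FCtx) (x : ℕ) (H : Fml) (t : Term) (F : Fml) :
      TermOk t ⟨G ++ (C.fill (H.subst x t)) :: K, F⟩ →
      NonWaitStep ⟨G ++ (C.fill (H.subst x t)) :: K, F⟩
                  ⟨G ++ (C.fill (.call x H)) :: K, F⟩
  | cexChoose (G : List Fml) (C : FCtx) (x : ℕ) (H : Fml) (t : Term) :
      TermOk t ⟨G, C.fill (H.subst x t)⟩ →
      NonWaitStep ⟨G, C.fill (H.subst x t)⟩ ⟨G, C.fill (.cex x H)⟩
  | replicate (G K : List Fml) (E F : Fml) :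
      NonWaitStep ⟨G ++ E :: K ++ [E], F⟩ ⟨G ++ E :: K, F⟩

/-- `Y` follows from the set `P` of premises by Wait. -/
def WaitStep (P : Set Sequent) (Y : Sequent) : Prop :=
  Y.stable ∧
  (∀ (C : FCtx) (H0 H1 : Fml), Y.succ = C.fill (.cand H0 H1) →
      (⟨Y.ante, C.fill H0⟩ : Sequent) ∈ P ∧ (⟨Y.ante, C.fill H1⟩ : Sequent) ∈ P) ∧
  (∀ (G K : List Fml) (C : FCtx) (H0 H1 : Fml),
      Y.ante = G ++ (C.fill (.cor H0 H1)) :: K →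
      (⟨G ++ (C.fill H0) :: K, Y.succ⟩ : Sequent) ∈ P ∧
      (⟨G ++ (C.fill H1) :: K, Y.succ⟩ : Sequent) ∈ P) ∧
  (∀ (C : FCtx) (x : ℕ) (H : Fml), Y.succ = C.fill (.call x H) →
      ∃ y, ¬ Y.mentionsVar y ∧
        (⟨Y.ante, C.fill (H.subst x (.var y))⟩ : Sequent) ∈ P) ∧
  (∀ (G K : List Fml) (C : FCtx) (x : ℕ) (H : Fml),
      Y.ante = G ++ (C.fill (.cex x H)) :: K →
      ∃ y, ¬ Y.mentionsVar y ∧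
        (⟨G ++ (C.fill (H.subst x (.var y))) :: K, Y.succ⟩ : Sequent) ∈ P)

/-- `X` follows from premises in `P` by one of the rules of CL12. -/
def CL12Step (P : Set Sequent) (X : Sequent) : Prop :=
  (∃ Y ∈ P, NonWaitStep Y X) ∨ WaitStep P X

/-- `L` is a CL12-proof of `X`: a nonempty sequence of sequents ending in `X` in which
every sequent follows from some earlier ones by a rule of CL12. -/
def IsCL12Proof (L : List Sequent) (X : Sequent) : Prop :=
  L ≠ [] ∧ L.getLast? = some X ∧
  ∀ (i : ℕ) (h : i < L.length), CL12Step {Y | Y ∈ L.take i} (L[i]'h)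

def CL12Proves (X : Sequent) : Prop := ∃ L, IsCL12Proof L X

/-- `Y` is a `⊥`-development of `X`. -/
inductive BotDev : Sequent → Sequent → Prop
  | c1 (E : List Fml) (C : FCtx) (H0 H1 : Fml) (i : Bool) :
      BotDev ⟨E, C.fill (.cand H0 H1)⟩ ⟨E, C.fill (if i then H1 else H0)⟩
  | c2 (E K : List Fml) (C : FCtx) (H0 H1 : Fml) (i : Bool) (F : Fml) :
      BotDev ⟨E ++ (C.fill (.cor H0 H1)) :: K, F⟩
             ⟨E ++ (C.fill (if i then H1 else H0)) :: K, F⟩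
  | c3 (E : List Fml) (C : FCtx) (x : ℕ) (H : Fml) (y : ℕ) :
      ¬ (Sequent.mk E (C.fill (.call x H))).mentionsVar y →
      BotDev ⟨E, C.fill (.call x H)⟩ ⟨E, C.fill (H.subst x (.var y))⟩
  | c4 (E K : List Fml) (C : FCtx) (x : ℕ) (H : Fml) (y : ℕ) (F : Fml) :
      ¬ (Sequent.mk (E ++ (C.fill (.cex x H)) :: K) F).mentionsVar y →
      BotDev ⟨E ++ (C.fill (.cex x H)) :: K, F⟩
             ⟨E ++ (C.fill (H.subst x (.var y))) :: K, F⟩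

/-- `Y` is a `⊤`-development of `X`: `X` follows from `Y` by a rule other than Wait. -/
def TopDev (X Y : Sequent) : Prop := NonWaitStep Y X

/-! ## Arithmetic: CLA1 and CLA2 -/

def fSucc : FuncSym := ⟨1, 0⟩
def fPlus : FuncSym := ⟨2, 0⟩
def fTimes : FuncSym := ⟨2, 1⟩

def tv (x : ℕ) : Term := .var x
def t0 : Term := .const 0
def tS (t : Term) : Term := .func fSucc fun _ => t
def tPlus (a b : Term) : Term := .func fPlus (duo a b)
def tTimes (a b : Term) : Term := .func fTimes (duo a b)
def fEq (a b : Term) : Fml := .atom false .eq (duo a b)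
def fNeq (a b : Term) : Fml := .atom true .eq (duo a b)

/-- The language of CLA1: only the constant `0`, the function symbols `'`, `+`, `×`
and the predicate symbol `=`. -/
def Term.inLangA : Term → Prop
  | .var _ => True
  | .const c => c = 0
  | .func f ts => (f = fSucc ∨ f = fPlus ∨ f = fTimes) ∧ ∀ i, (ts i).inLangA

def Fml.inLangA : Fml → Prop
  | .tt => True
  | .ff => True
  | .atom _ p a => p = .eq ∧ ∀ i, (a i).inLangA
  | .and A B => A.inLangA ∧ B.inLangA
  | .or A B => A.inLangA ∧ B.inLangA
  | .cand A B => A.inLangA ∧ B.inLangA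
  | .cor A B => A.inLangA ∧ B.inLangA
  | .all _ A => A.inLangA
  | .ex _ A => A.inLangA
  | .call _ A => A.inLangA
  | .cex _ A => A.inLangA

def Sequent.inLangA (S : Sequent) : Prop := (∀ E ∈ S.ante, E.inLangA) ∧ S.succ.inLangA

def allClose : List ℕ → Fml → Fml
  | [], F => F
  | v :: vs, F => .all v (allClose vs F)

def callClose : List ℕ → Fml → Fml
  | [], F => F
  | v :: vs, F => .call v (callClose vs F)

/-- The induction formula `F(0) ∧ ∀x(F(x)→F(x')) → ∀x F(x)`. -/
def indFml (F : Fml) (x : ℕ) : Fml :=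
  (Fml.and (F.subst x t0) (.all x (F.imp (F.subst x (tS (tv x)))))).imp (.all x F)

/-- The axioms of PA: the `∀`-closures of the six defining axioms of `'`, `+`, `×`
together with the induction scheme for elementary formulas (of the language `lang`). -/
inductive IsPAAx (lang : Fml → Prop) : Fml → Prop
  | a1 : IsPAAx lang (.all 0 (fNeq t0 (tS (tv 0))))
  | a2 : IsPAAx lang (.all 0 (.all 1 ((fEq (tS (tv 0)) (tS (tv 1))).imp (fEq (tv 0) (tv 1)))))
  | a3 : IsPAAx lang (.all 0 (fEq (tPlus (tv 0) t0) (tv 0)))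
  | a4 : IsPAAx lang (.all 0 (.all 1
      (fEq (tPlus (tv 0) (tS (tv 1))) (tS (tPlus (tv 0) (tv 1))))))
  | a5 : IsPAAx lang (.all 0 (fEq (tTimes (tv 0) t0) t0))
  | a6 : IsPAAx lang (.all 0 (.all 1
      (fEq (tTimes (tv 0) (tS (tv 1))) (tPlus (tTimes (tv 0) (tv 1)) (tv 0)))))
  | ind (vs : List ℕ) (F : Fml) (x : ℕ) :
      F.elementary → lang F → (∀ y, (indFml F x).freeVar y → y ∈ vs) →
      IsPAAx lang (allClose vs (indFml F x))

/-- Axiom 7 of CLA1: `⊓x⊔y(y = x')`. -/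
def axSeven : Fml := .call 0 (.cex 1 (fEq (tv 1) (tS (tv 0))))

/-- The axioms of a CL-based arithmetic: the PA axioms plus `⊓x⊔y(y = x')`. -/
def IsCLAAx (lang : Fml → Prop) (A : Fml) : Prop := IsPAAx lang A ∨ A = axSeven

def CLA1Ax : Fml → Prop := IsCLAAx Fml.inLangA
def CLA2Ax : Fml → Prop := IsCLAAx fun _ => True

/-- (Extended) natural deductions of the CL-based arithmetics: a deduction of `F` from
hypotheses `Γ`, where `lc` is Logical Consequence (carrying a CL12-proof of the
corresponding sequent, so that these deductions are *extended* proofs) and `ci` is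
Constructive Induction (with a fresh variable `x`). -/
inductive CLADed (ax : Fml → Prop) : List Fml → Fml → Type
  | hyp (Γ : List Fml) (F : Fml) : F ∈ Γ → CLADed ax Γ F
  | axm (Γ : List Fml) (F : Fml) : ax F → CLADed ax Γ F
  | lc (Γ Gs : List Fml) (F : Fml) (L : List Sequent) :
      IsCL12Proof L ⟨Gs, F⟩ → (∀ G ∈ Gs, CLADed ax Γ G) → CLADed ax Γ F
  | ci (Γ : List Fml) (F : Fml) (x : ℕ) :
      (∀ E ∈ Γ, ¬ E.mentionsVar x) →
      CLADed ax Γ (F.subst x t0) →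
      CLADed ax (F :: Γ) (F.subst x (tS (tv x))) →
      CLADed ax Γ (.call x F)

/-- Provability of the sequent `Γ ∘̸– F` in a CL-based arithmetic. -/
def CLAProves (ax : Fml → Prop) (Γ : List Fml) (F : Fml) : Prop := Nonempty (CLADed ax Γ F)

/-- The standard interpretation of the function symbols. -/
def stdFn (f : FuncSym) (v : Fin f.ar → ℕ) : ℕ :=
  if h : f = fSucc then v ⟨0, by rw [h]; exact Nat.zero_lt_one⟩ + 1
  else if h : f = fPlus then
    v ⟨0, by rw [h]; exact Nat.zero_lt_two⟩ + v ⟨1, by rw [h]; exact Nat.one_lt_two⟩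
  else if h : f = fTimes then
    v ⟨0, by rw [h]; exact Nat.zero_lt_two⟩ * v ⟨1, by rw [h]; exact Nat.one_lt_two⟩
  else 0

def stdPr (p : PredSym) (v : Fin p.arity → ℕ) : Prop :=
  match p, v with
  | .eq, v => v ⟨0, Nat.zero_lt_two⟩ = v ⟨1, Nat.one_lt_two⟩
  | .pred _ _, _ => False

/-- The standard interpretation `†`. -/
def stdInterp : Interp where
  fn := stdFn
  pr := stdPr
  eq_equiv := ⟨fun _ => rfl, fun h => h.symm, fun h1 h2 => h1.trans h2⟩
  fn_congr := fun f u v h => by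
    have huv : u = v := funext fun i => h i
    show stdFn f u = stdFn f v
    rw [huv]
  pr_congr := fun p u v h => by
    have huv : u = v := funext fun i => h i
    rw [huv]

/-- An interpretation is standard iff it interprets `=` as identity, `'` as successor,
`+` as sum and `×` as product. -/
def Interp.IsStandard (I : Interp) : Prop :=
  (∀ v : Fin 2 → ℕ, I.pr .eq v ↔ v 0 = v 1) ∧
  (∀ v : Fin 1 → ℕ, I.fn fSucc v = v 0 + 1) ∧
  (∀ v : Fin 2 → ℕ, I.fn fPlus v = v 0 + v 1) ∧
  (∀ v : Fin 2 → ℕ, I.fn fTimes v = v 0 * v 1)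

/-- Provability in classical Peano arithmetic (by Gödel's completeness theorem:
semantic consequence of the PA axioms). -/
def PAProvable (F : Fml) : Prop :=
  ∀ (St : Struc) (e : ℕ → St.D),
    (∀ A, IsPAAx Fml.inLangA A → ∀ e' : ℕ → St.D, A.trueIn St e') → F.trueIn St e

/-! ## Primitive-recursive constructions -/

/-- Absolute primitive-recursive definitions (forms (I), (II), (III)). -/
inductive PRDefAbs : FuncSym → Fml → Prop
  | defI (f : FuncSym) (h : f.ar = 1) :
      PRDefAbs f (.all 0 (fEq (.func f fun _ => tv 0) (tS (tv 0))))
  | defII (f : FuncSym) :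
      PRDefAbs f (allClose (List.range f.ar) (fEq (.func f fun j => tv j.val) t0))
  | defIII (f : FuncSym) (i : Fin f.ar) :
      PRDefAbs f (allClose (List.range f.ar) (fEq (.func f fun j => tv j.val) (tv i.val)))

/-- Relative primitive-recursive definitions (forms (IV) composition and
(V) primitive recursion), together with the list of function symbols in terms of
which the new symbol is defined. -/
inductive PRDefRel : FuncSym → List FuncSym → Fml → Prop
  | defIV (f g : FuncSym) (hs : Fin g.ar → FuncSym)
      (hh : ∀ j, (hs j).ar = f.ar) :
      PRDefRel f (g :: List.ofFn hs)
        (allClose (List.range f.ar)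
          (fEq (.func f fun i => tv i.val)
               (.func g fun j => .func (hs j) fun i => tv i.val)))
  | defV (f g h : FuncSym) (n : ℕ) (hn : f.ar = n) (h1 : 1 ≤ n)
      (hg : g.ar = n - 1) (hh : h.ar = n + 1) :
      PRDefRel f [g, h]
        (.and (allClose (List.range' 1 (n - 1))
                 (fEq (.func f fun i => if i.val = 0 then t0 else tv i.val)
                      (.func g fun j => tv (j.val + 1))))
              (allClose (List.range n)
                 (fEq (.func f fun i => if i.val = 0 then tS (tv 0) else tv i.val)
                      (.func h fun j =>
                        if j.val = 0 then tv 0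
                        else if j.val = 1 then .func f fun i => tv i.val
                        else tv (j.val - 1)))))

/-- `Es` is a primitive-recursive construction of `f`. -/
def IsPRConstruction (f : FuncSym) (Es : List Fml) : Prop :=
  ∃ gs : List FuncSym, gs.length = Es.length ∧ gs.Nodup ∧ gs.getLast? = some f ∧
    ∀ (i : ℕ) (hi : i < Es.length) (hg : i < gs.length),
      PRDefAbs (gs[i]'hg) (Es[i]'hi) ∨
      ∃ deps : List FuncSym, PRDefRel (gs[i]'hg) deps (Es[i]'hi) ∧
        ∀ d ∈ deps, ∃ (j : ℕ) (hj : j < gs.length), j < i ∧ gs[j]'hj = d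

/-- The goal formula `⊓x₁…⊓xₙ⊔y (f(x₁,…,xₙ) = y)`. -/
def prGoal (f : FuncSym) : Fml :=
  callClose (List.range f.ar)
    (.cex f.ar (fEq (.func f fun i => tv i.val) (tv f.ar)))

/-- Contraction: from `E⃗,G,G ∘̸– F` infer `E⃗,G ∘̸– F`. -/
def ContractionRule (prem : List Sequent) (concl : Sequent) : Prop :=
  ∃ (E : List Fml) (G F : Fml), prem = [⟨E ++ [G, G], F⟩] ∧ concl = ⟨E ++ [G], F⟩

/-!
The conclusion machine opens by replicating the leaf `G` of the antecedent tree of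
`E⃗,G ∘̸– F` (at address `1^|E|`) and then plays exactly as the premise machine. The replication
turns the tree into the one of `E⃗,G,G ∘̸– F`: a position `Φ` is legal in the premise game iff the
replication followed by `Φ` is legal in the conclusion game (the replication cannot recur, since
in the replicated tree every replicable address extends a leaf and leaf addresses are
prefix-free), and an infinite branch meets a copy of `G` in the replicated tree iff it meets `G`
in the original one. So each run of the conclusion machine is a run of the premise machine with
the replication prepended; it is illegal for the environment only if that run is, and it is won
by the machine whenever that run is.
-/

theorem List.ne_nil_and_dropLast_eq_iff {α : Type*} {v w : List α} :
    v ≠ [] ∧ v.dropLast = w ↔ ∃ b, v = w ++ [b] := by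
  constructor
  · rintro ⟨hv, rfl⟩
    exact ⟨v.getLast hv, (List.dropLast_append_getLast hv).symm⟩
  · rintro ⟨b, rfl⟩
    simp

theorem List.forall_count_cons_le_one_iff {α β : Type*} [BEq α] [LawfulBEq α] {f : β → α}
    {l : List α} {b : β} :
    (∀ c, (f b :: l).count (f c) ≤ 1) ↔ (∀ c, l.count (f c) ≤ 1) ∧ f b ∉ l := by
  constructor
  · intro h
    refine ⟨fun c => List.count_le_count_cons.trans (h c), fun hb => ?_⟩
    have := h b
    rw [List.count_cons_self] at this
    have := List.count_pos_iff.mpr hb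
    omega
  · rintro ⟨h, hb⟩ c
    rw [List.count_cons]
    split_ifs with hbc
    · rw [← beq_iff_eq.mp hbc, List.count_eq_zero.mpr hb]
    · exact h c

theorem List.filterMap_range_eq_of_le {α : Type*} {g : ℕ → Option α} {N M : ℕ}
    (hg : ∀ n ≥ N, g n = none) (hNM : N ≤ M) :
    (List.range M).filterMap g = (List.range N).filterMap g := by
  obtain ⟨k, rfl⟩ := Nat.exists_eq_add_of_le hNM
  have htail : (List.map (N + ·) (List.range k)).filterMap g = [] :=
    List.filterMap_eq_nil_iff.mpr fun _ hn => by
      obtain ⟨n, -, rfl⟩ := List.mem_map.mp hn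
      exact hg _ (Nat.le_add_right N n)
  rw [List.range_add, List.filterMap_append, htail, List.append_nil]

theorem List.IsPrefix.getElem?_eq_some {α : Type*} {l₁ l₂ : List α} (h : l₁ <+: l₂) {n : ℕ}
    {a : α} (ha : l₁[n]? = some a) : l₂[n]? = some a := by
  obtain ⟨hn, rfl⟩ := List.getElem?_eq_some_iff.mp ha
  exact List.prefix_iff_getElem?.mp h n hn

theorem prefInf_of_prefix {v w : List Bool} {x : ℕ → Bool} (h : v <+: w) (hw : prefInf w x) :
    prefInf v x := fun i hi => by
  simpa only [List.get_eq_getElem, h.getElem hi] using hw i (hi.trans_le h.length_le)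

theorem prefInf_append_singleton {w : List Bool} {x : ℕ → Bool} (hw : prefInf w x) :
    prefInf (w ++ [x w.length]) x := fun i hi => by
  simp only [List.get_eq_getElem, List.length_append, List.length_singleton] at hi ⊢
  rcases (Nat.lt_succ_iff.mp hi).lt_or_eq with hi | rfl
  · rw [List.getElem_append_left hi]
    exact hw i hi
  · simp

namespace GTree

def replicateAt : GTree → List Bool → GTree
  | .leaf A, [] => .node (.leaf A) (.leaf A)
  | .node l r, false :: w => .node (l.replicateAt w) r
  | .node l r, true :: w => .node l (r.replicateAt w)
  | .leaf A, _ :: _ => .leaf A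
  | .node l r, [] => .node l r

theorem mem_leaves_leaf {A C : ConstGame} {v : List Bool} :
    (v, C) ∈ (leaf A).leaves ↔ v = [] ∧ C = A := by
  simp [leaves]

theorem mem_leaves_node {l r : GTree} {v : List Bool} {C : ConstGame} :
    (v, C) ∈ (node l r).leaves ↔
      (∃ v', v = false :: v' ∧ (v', C) ∈ l.leaves) ∨
        ∃ v', v = true :: v' ∧ (v', C) ∈ r.leaves := by
  simp only [leaves, List.mem_append, List.mem_map, Prod.mk.injEq, Prod.exists]
  aesop

theorem mem_leaves_replicateAt {T : GTree} {w v : List Bool} {C : ConstGame} :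
    (v, C) ∈ (T.replicateAt w).leaves ↔
      ((v, C) ∈ T.leaves ∧ v ≠ w) ∨ ((w, C) ∈ T.leaves ∧ ∃ b, v = w ++ [b]) := by
  induction T generalizing w v with
  | leaf A =>
    cases w <;> simp only [replicateAt, mem_leaves_node, mem_leaves_leaf] <;> aesop
  | node l r ihl ihr =>
    rcases w with _ | ⟨_ | _, w⟩ <;> simp only [replicateAt, mem_leaves_node, ihl, ihr] <;> aesop

theorem eq_of_prefix_of_mem_leaves {T : GTree} {u v : List Bool} {A B : ConstGame}
    (hu : (u, A) ∈ T.leaves) (hv : (v, B) ∈ T.leaves) (h : u <+: v) : u = v := by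
  induction T generalizing u v with
  | leaf C => rw [mem_leaves_leaf] at hu hv; rw [hu.1, hv.1]
  | node l r ihl ihr =>
    rw [mem_leaves_node] at hu hv
    rcases hu with ⟨u, rfl, hu⟩ | ⟨u, rfl, hu⟩ <;> rcases hv with ⟨v, rfl, hv⟩ | ⟨v, rfl, hv⟩ <;>
      simp only [List.cons_prefix_cons, Bool.false_eq_true, Bool.true_eq_false, false_and,
        true_and, List.cons.injEq] at h ⊢
    exacts [ihl hu hv h, ihr hu hv h]

variable {T : GTree} {w : List Bool}

theorem exists_mem_leaves_replicateAt_prefInf_iff {C : ConstGame} {x : ℕ → Bool} :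
    (∃ v, (v, C) ∈ (T.replicateAt w).leaves ∧ prefInf v x) ↔
      ∃ v, (v, C) ∈ T.leaves ∧ prefInf v x := by
  simp only [mem_leaves_replicateAt]
  constructor
  · rintro ⟨v, ⟨hv, -⟩ | ⟨hw, b, rfl⟩, hx⟩
    exacts [⟨v, hv, hx⟩, ⟨w, hw, prefInf_of_prefix (List.prefix_append _ _) hx⟩]
  · rintro ⟨v, hv, hx⟩
    by_cases hvw : v = w
    · subst hvw
      exact ⟨_, Or.inr ⟨hv, _, rfl⟩, prefInf_append_singleton hx⟩
    · exact ⟨v, Or.inl ⟨hv, hvw⟩, hx⟩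

theorem forall_mem_leaves_replicateAt_iff {Q : ConstGame → (ℕ → Bool) → Prop} :
    (∀ p ∈ (T.replicateAt w).leaves, ∀ x, prefInf p.1 x → Q p.2 x) ↔
      ∀ p ∈ T.leaves, ∀ x, prefInf p.1 x → Q p.2 x := by
  constructor
  · rintro h ⟨v, C⟩ hp x hx
    obtain ⟨v', hp', hx'⟩ := exists_mem_leaves_replicateAt_prefInf_iff.mpr ⟨v, hp, hx⟩
    exact h _ hp' x hx'
  · rintro h ⟨v, C⟩ hp x hx
    obtain ⟨v', hp', hx'⟩ := exists_mem_leaves_replicateAt_prefInf_iff.mp ⟨v, hp, hx⟩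
    exact h _ hp' x hx'

theorem exists_mem_leaves_replicateAt_iff {Q : ConstGame → (ℕ → Bool) → Prop} :
    (∃ p ∈ (T.replicateAt w).leaves, ∃ x, prefInf p.1 x ∧ Q p.2 x) ↔
      ∃ p ∈ T.leaves, ∃ x, prefInf p.1 x ∧ Q p.2 x := by
  constructor
  · rintro ⟨⟨v, C⟩, hp, x, hx, hQ⟩
    obtain ⟨v', hp', hx'⟩ := exists_mem_leaves_replicateAt_prefInf_iff.mp ⟨v, hp, hx⟩
    exact ⟨_, hp', x, hx', hQ⟩
  · rintro ⟨⟨v, C⟩, hp, x, hx, hQ⟩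
    obtain ⟨v', hp', hx'⟩ := exists_mem_leaves_replicateAt_prefInf_iff.mpr ⟨v, hp, hx⟩
    exact ⟨_, hp', x, hx', hQ⟩

variable {A : ConstGame}

theorem exists_mem_leaves_replicateAt_fst_eq_iff (hw : (w, A) ∈ T.leaves) {v : List Bool} :
    (∃ p ∈ (T.replicateAt w).leaves, p.1 = v) ↔
      ((∃ p ∈ T.leaves, p.1 = v) ∧ v ≠ w) ∨ ∃ b, v = w ++ [b] := by
  constructor
  · rintro ⟨⟨v, C⟩, hp, rfl⟩
    rcases mem_leaves_replicateAt.mp hp with ⟨hp, hne⟩ | ⟨-, b, rfl⟩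
    exacts [Or.inl ⟨⟨_, hp, rfl⟩, hne⟩, Or.inr ⟨b, rfl⟩]
  · rintro (⟨⟨⟨v, C⟩, hp, rfl⟩, hne⟩ | ⟨b, rfl⟩)
    exacts [⟨_, mem_leaves_replicateAt.mpr (Or.inl ⟨hp, hne⟩), rfl⟩,
      ⟨(w ++ [b], A), mem_leaves_replicateAt.mpr (Or.inr ⟨hw, b, rfl⟩), rfl⟩]

theorem exists_mem_leaves_replicateAt_prefix_iff (hw : (w, A) ∈ T.leaves) {v : List Bool} :
    (∃ p ∈ (T.replicateAt w).leaves, v <+: p.1) ↔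
      (∃ p ∈ T.leaves, v <+: p.1) ∨ ∃ b, v = w ++ [b] := by
  constructor
  · rintro ⟨⟨u, C⟩, hp, hvu⟩
    rcases mem_leaves_replicateAt.mp hp with ⟨hp, -⟩ | ⟨hwC, b, rfl⟩
    · exact Or.inl ⟨_, hp, hvu⟩
    · rcases List.prefix_concat_iff.mp hvu with rfl | hvw
      exacts [Or.inr ⟨b, rfl⟩, Or.inl ⟨_, hwC, hvw⟩]
  · rintro (⟨⟨u, C⟩, hp, hvu⟩ | ⟨b, rfl⟩)
    · by_cases huw : u = w
      · subst huw
        exact ⟨_, mem_leaves_replicateAt.mpr (Or.inr ⟨hp, false, rfl⟩),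
          hvu.trans (List.prefix_append _ _)⟩
      · exact ⟨_, mem_leaves_replicateAt.mpr (Or.inl ⟨hp, huw⟩), hvu⟩
    · exact ⟨(w ++ [b], A), mem_leaves_replicateAt.mpr (Or.inr ⟨hw, b, rfl⟩), List.prefix_rfl⟩

end GTree

theorem stdGTree_append_replicateAt (A G : ConstGame) (l : List ConstGame) :
    (stdGTree A (l ++ [G])).replicateAt (List.replicate (l.length + 1) true) =
      stdGTree A (l ++ [G, G]) := by
  induction l generalizing A with
  | nil => rfl
  | cons B l ih =>
    rw [List.length_cons, List.replicate_succ]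
    simp only [List.cons_append, stdGTree, GTree.replicateAt, ih]

theorem mem_leaves_stdGTree_append (A G : ConstGame) (l : List ConstGame) :
    (List.replicate (l.length + 1) true, G) ∈ (stdGTree A (l ++ [G])).leaves := by
  induction l generalizing A with
  | nil => simp [stdGTree, GTree.leaves]
  | cons B l ih =>
    rw [List.length_cons, List.replicate_succ, List.cons_append, stdGTree, GTree.mem_leaves_node]
    exact Or.inr ⟨_, rfl, ih B⟩

theorem Sequent.exists_game_eq_dfb_replicateAt (I : Interp) (e : Valuation) (E : List Fml)
    (G F : Fml) :
    ∃ T : GTree, (List.replicate E.length true, G.game I e) ∈ T.leaves ∧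
      (⟨E ++ [G], F⟩ : Sequent).game I e = dfb T (F.game I e) ∧
      (⟨E ++ [G, G], F⟩ : Sequent).game I e =
        dfb (T.replicateAt (List.replicate E.length true)) (F.game I e) := by
  cases E with
  | nil => exact ⟨.leaf (G.game I e), by simp [GTree.leaves], rfl, rfl⟩
  | cons E₀ E =>
    refine ⟨stdGTree (E₀.game I e) ((E ++ [G]).map fun A => A.game I e), ?_, rfl, ?_⟩
    · simpa using mem_leaves_stdGTree_append (E₀.game I e) (G.game I e) (E.map fun A => A.game I e)
    · have := stdGTree_append_replicateAt (E₀.game I e) (G.game I e) (E.map fun A => A.game I e)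
      simp only [List.map_append, List.map_cons, List.map_nil, List.length_map] at this ⊢
      rw [List.length_cons, this]
      simp only [Sequent.game, List.cons_append, List.map_append, List.map_cons, List.map_nil]

namespace RunT

def cons (lm : Labmove) : RunT → RunT
  | .fin l => .fin (lm :: l)
  | .inf f => .inf fun | 0 => lm | n + 1 => f n

theorem take_zero (Γ : RunT) : Γ.take 0 = [] := by
  cases Γ <;> rfl

theorem take_cons_succ (lm : Labmove) (Γ : RunT) (n : ℕ) :
    (Γ.cons lm).take (n + 1) = lm :: Γ.take n := by
  cases Γ with
  | fin l => rfl
  | inf f => simp only [cons, take, List.range_succ_eq_map, List.map_cons, List.map_map]; rfl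

theorem hasPrefix_cons {Γ : RunT} {Φ : List Labmove} (lm : Labmove) (h : Γ.hasPrefix Φ) :
    (Γ.cons lm).hasPrefix (lm :: Φ) := by
  rw [hasPrefix, List.length_cons, take_cons_succ, h]

theorem finMany_cons {P : Labmove → Prop} (lm : Labmove) {Γ : RunT} (h : Γ.finMany P) :
    (Γ.cons lm).finMany P := by
  cases Γ with
  | fin l => trivial
  | inf f =>
    refine ((h.image (· + 1)).insert 0).subset ?_
    rintro (_ | n) hn
    exacts [Set.mem_insert _ _, Set.mem_insert_of_mem _ ⟨n, hn, rfl⟩]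

theorem fmap_inf_of_forall_ge {g : Labmove → Option Labmove} {f : ℕ → Labmove} {N : ℕ}
    (hN : ∀ n ≥ N, g (f n) = none) :
    (RunT.inf f).fmap g = .fin ((List.range N).filterMap fun n => g (f n)) := by
  have hfin : ¬ {n | (g (f n)).isSome = true}.Infinite := fun hI =>
    hI ((Set.finite_lt_nat N).subset fun n hn => by
      by_contra hle
      simp [hN n (not_lt.mp hle)] at hn)
  rw [fmap, dif_neg hfin]
  have hN' := (not_infinite_bound hfin).choose_spec
  have hN'none : ∀ n ≥ (not_infinite_bound hfin).choose, g (f n) = none := fun n hn =>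
    Option.not_isSome_iff_eq_none.mp fun hs => (hN' n hs).not_ge hn
  congr 1
  rw [← List.filterMap_range_eq_of_le hN'none (le_max_right N _),
    List.filterMap_range_eq_of_le hN (le_max_left N _)]

theorem fmap_cons_of_eq_none {g : Labmove → Option Labmove} {lm : Labmove} (hg : g lm = none)
    (Γ : RunT) : (Γ.cons lm).fmap g = Γ.fmap g := by
  cases Γ with
  | fin l => simp [cons, fmap, hg]
  | inf f =>
    by_cases hI : {n | (g (f n)).isSome = true}.Infinite
    · set f' : ℕ → Labmove := fun | 0 => lm | n + 1 => f n with hf'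
      have h0 : ¬ (g (f' 0)).isSome = true := by simp [f', hg]
      have hI' : {n | (g (f' n)).isSome = true}.Infinite :=
        (hI.image (add_left_injective 1).injOn).mono (by rintro _ ⟨n, hn, rfl⟩; exact hn)
      rw [cons, ← hf', fmap, fmap, dif_pos hI', dif_pos hI]
      congr 1
      funext k
      have hk := Nat.nth_add_one (p := fun n => (g (f' n)).isSome = true) (n := k) h0
        fun h => h0 (h ▸ Nat.nth_mem_of_infinite hI' k)
      rw [← hk]
    · obtain ⟨N, hlt⟩ := not_infinite_bound hI
      have hN : ∀ n ≥ N, g (f n) = none := fun n hn =>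
        Option.not_isSome_iff_eq_none.mp fun hs => (hlt n hs).not_ge hn
      rw [cons, fmap_inf_of_forall_ge (N := N + 1)
          (by rintro (_ | n) hn; exacts [hg, hN n (by omega)]),
        fmap_inf_of_forall_ge hN, List.range_succ_eq_map, List.filterMap_cons, hg,
        List.filterMap_map]
      rfl

end RunT

namespace ConstGame

variable {G₁ G₂ : ConstGame} {lm : Labmove} {p : Player} {Γ : RunT}

theorem illegalFor_cons (hiff : ∀ Φ, G₁.legalPos Φ ↔ G₂.legalPos (lm :: Φ))
    (h : G₁.illegalFor p Γ) : G₂.illegalFor p (Γ.cons lm) := by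
  obtain ⟨Φ, lm', hpre, hleg, hnleg, hpl⟩ := h
  exact ⟨lm :: Φ, lm', RunT.hasPrefix_cons lm hpre, (hiff Φ).mp hleg,
    fun h => hnleg ((hiff _).mpr h), hpl⟩

theorem legal_cons (hiff : ∀ Φ, G₁.legalPos Φ ↔ G₂.legalPos (lm :: Φ))
    (hnil : G₂.legalPos [lm] → G₂.legalPos []) (h : G₁.legal Γ) : G₂.legal (Γ.cons lm) := by
  rintro (_ | n)
  · rw [RunT.take_zero]
    refine hnil ((hiff []).mp ?_)
    simpa only [RunT.take_zero] using h 0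
  · rw [RunT.take_cons_succ]
    exact (hiff _).mp (h n)

theorem wonBy_cons (hiff : ∀ Φ, G₁.legalPos Φ ↔ G₂.legalPos (lm :: Φ))
    (hnil : G₂.legalPos [lm] → G₂.legalPos []) (hwn : G₁.wn Γ = p → G₂.wn (Γ.cons lm) = p)
    (h : G₁.wonBy p Γ) : G₂.wonBy p (Γ.cons lm) :=
  h.imp (illegalFor_cons hiff) fun ⟨hleg, hw⟩ => ⟨legal_cons hiff hnil hleg, hwn hw⟩

end ConstGame

section DfbReplicate

variable {T : GTree} {w : List Bool} {A B : ConstGame} {Φ : List Labmove} {Γ : RunT}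

theorem exists_prefix_mem_leaves_of_repl
    (hsh : ∀ i lm, Φ[i]? = some lm → dfbShape T Φ i lm) {i : ℕ} {v : List Bool}
    (hi : Φ[i]? = some ⟨.top, .repl v⟩) : ∃ p ∈ T.leaves, p.1 <+: v := by
  induction i using Nat.strong_induction_on generalizing v with
  | _ i ih =>
    rcases hsh i _ hi with ⟨p, hp, rfl⟩ | ⟨-, j, hj, hchain⟩
    · exact ⟨p, hp, List.prefix_rfl⟩
    · obtain ⟨p, hp, hpv⟩ := ih j hj hchain
      exact ⟨p, hp, hpv.trans (List.dropLast_prefix v)⟩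

theorem repl_not_mem_of_replicateAt (hw : (w, A) ∈ T.leaves)
    (hsh : ∀ i lm, Φ[i]? = some lm → dfbShape (T.replicateAt w) Φ i lm) :
    (⟨.top, .repl w⟩ : Labmove) ∉ Φ := by
  intro hmem
  obtain ⟨i, hi, hΦi⟩ := List.getElem_of_mem hmem
  obtain ⟨⟨u, C⟩, hp, huw⟩ :=
    exists_prefix_mem_leaves_of_repl hsh (List.getElem?_eq_some_iff.mpr ⟨hi, hΦi⟩)
  rcases GTree.mem_leaves_replicateAt.mp hp with ⟨hp, hne⟩ | ⟨-, b, rfl⟩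
  · exact hne (GTree.eq_of_prefix_of_mem_leaves hp hw huw)
  · simpa using huw.length_le

theorem exists_repl_dropLast_cons_iff {i : ℕ} {v : List Bool} :
    (v ≠ [] ∧ ∃ j < i + 1,
        ((⟨.top, .repl w⟩ : Labmove) :: Φ)[j]? = some ⟨.top, .repl v.dropLast⟩) ↔
      (∃ b, v = w ++ [b]) ∨ (v ≠ [] ∧ ∃ j < i, Φ[j]? = some ⟨.top, .repl v.dropLast⟩) := by
  rw [Nat.exists_lt_succ_left, ← List.ne_nil_and_dropLast_eq_iff]
  simp only [List.getElem?_cons_zero, List.getElem?_cons_succ, Option.some_inj, Labmove.mk.injEq,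
    Move.repl.injEq, true_and, eq_comm (a := w)]
  tauto

theorem dfbShape_replicateAt_iff (hw : (w, A) ∈ T.leaves) (hnot : (⟨.top, .repl w⟩ : Labmove) ∉ Φ)
    {i : ℕ} {lm : Labmove} (hi : Φ[i]? = some lm) :
    dfbShape (T.replicateAt w) Φ i lm ↔ dfbShape T (⟨.top, .repl w⟩ :: Φ) (i + 1) lm := by
  obtain ⟨pl, mv⟩ := lm
  cases mv with
  | repl v =>
    cases pl with
    | bot => rfl
    | top =>
      have hvw : v ≠ w := by rintro rfl; exact hnot (List.mem_of_getElem? hi)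
      simp only [dfbShape, GTree.exists_mem_leaves_replicateAt_fst_eq_iff hw,
        exists_repl_dropLast_cons_iff, ne_eq, hvw, not_false_eq_true, and_true, or_assoc]
  | ante v β =>
    simp only [dfbShape, GTree.exists_mem_leaves_replicateAt_prefix_iff hw,
      exists_repl_dropLast_cons_iff, or_assoc]
  | _ => rfl

theorem dfbLegalPos_replicateAt_iff (hw : (w, A) ∈ T.leaves) :
    dfbLegalPos (T.replicateAt w) B Φ ↔ dfbLegalPos T B (⟨.top, .repl w⟩ :: Φ) := by
  constructor
  · rintro ⟨hsh, hcnt, hsucc, hleaf⟩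
    have hnot := repl_not_mem_of_replicateAt hw hsh
    refine ⟨?_, List.forall_count_cons_le_one_iff.mpr ⟨hcnt, hnot⟩, hsucc,
      GTree.forall_mem_leaves_replicateAt_iff
        (Q := fun C x => (gNeg C).legalPos (Φ.filterMap (projA x))) |>.mp hleaf⟩
    rintro (_ | i) lm hi
    · cases Option.some_inj.mp hi
      exact Or.inl ⟨_, hw, rfl⟩
    · exact (dfbShape_replicateAt_iff hw hnot hi).mp (hsh i lm hi)
  · rintro ⟨hsh, hcnt, hsucc, hleaf⟩
    obtain ⟨hcnt, hnot⟩ := List.forall_count_cons_le_one_iff.mp hcnt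
    exact ⟨fun i lm hi => (dfbShape_replicateAt_iff hw hnot hi).mpr (hsh (i + 1) lm hi), hcnt,
      hsucc, GTree.forall_mem_leaves_replicateAt_iff
        (Q := fun C x => (gNeg C).legalPos (Φ.filterMap (projA x))) |>.mpr hleaf⟩

theorem dfbLegalPos_nil_of_singleton_repl (h : dfbLegalPos T B [⟨.top, .repl w⟩]) :
    dfbLegalPos T B [] :=
  ⟨by simp, by simp, h.2.2.1, h.2.2.2⟩

theorem dfb_wn_cons_repl (h : (dfb (T.replicateAt w) B).wn Γ = .top) :
    (dfb T B).wn (Γ.cons ⟨.top, .repl w⟩) = .top := by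
  dsimp only [dfb] at h ⊢
  split_ifs at h with hc
  obtain ⟨hfin, hwin⟩ := hc
  rw [if_pos]
  refine ⟨RunT.finMany_cons _ hfin, ?_⟩
  simp only [RunT.fmap_cons_of_eq_none (rfl : projS ⟨.top, .repl w⟩ = none),
    fun x => RunT.fmap_cons_of_eq_none (rfl : projA x ⟨.top, .repl w⟩ = none)]
  exact hwin.imp_right (GTree.exists_mem_leaves_replicateAt_iff
    (Q := fun C x => (gNeg C).wn (Γ.fmap (projA x)) = .top)).mp

theorem dfb_illegalFor_cons_repl (hw : (w, A) ∈ T.leaves) {p : Player}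
    (h : (dfb (T.replicateAt w) B).illegalFor p Γ) :
    (dfb T B).illegalFor p (Γ.cons ⟨.top, .repl w⟩) :=
  ConstGame.illegalFor_cons (fun _ => dfbLegalPos_replicateAt_iff hw) h

theorem dfb_wonBy_top_cons_repl (hw : (w, A) ∈ T.leaves)
    (h : (dfb (T.replicateAt w) B).wonBy .top Γ) :
    (dfb T B).wonBy .top (Γ.cons ⟨.top, .repl w⟩) :=
  ConstGame.wonBy_cons (fun _ => dfbLegalPos_replicateAt_iff hw)
    dfbLegalPos_nil_of_singleton_repl dfb_wn_cons_repl h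

end DfbReplicate

section Spelled

variable {pos : ℕ → List Labmove}

theorem spelledGet_eq_some_iff (hmono : ∀ s t, s ≤ t → pos s <+: pos t) {n : ℕ} {a : Labmove} :
    spelledGet pos n = some a ↔ ∃ t, (pos t)[n]? = some a := by
  unfold spelledGet
  split_ifs with h
  · refine ⟨fun ha => ⟨_, ha⟩, fun ⟨t, ht⟩ => ?_⟩
    have hfind := List.getElem?_eq_getElem (Nat.find_spec h)
    rcases le_total (Nat.find h) t with hle | hle
    · have hsame := List.IsPrefix.getElem?_eq_some (hmono _ _ hle) hfind
      rw [ht] at hsame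
      rw [hfind, hsame]
    · exact List.IsPrefix.getElem?_eq_some (hmono _ _ hle) ht
  · simp only [false_iff, not_exists]
    exact fun t ht => h ⟨t, (List.getElem?_eq_some_iff.mp ht).1⟩

theorem spelled_eq_fin (hmono : ∀ s t, s ≤ t → pos s <+: pos t) {t : ℕ}
    (ht : ∀ s, (pos s).length ≤ (pos t).length) : spelled pos = .fin (pos t) := by
  have h : ∃ t, ∀ s, (pos s).length ≤ (pos t).length := ⟨t, ht⟩
  have hlen : (pos (Nat.find h)).length = (pos t).length :=
    le_antisymm (ht _) (Nat.find_spec h t)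
  rw [spelled, dif_pos h]
  rcases le_total (Nat.find h) t with hle | hle
  · rw [(hmono _ _ hle).eq_of_length hlen]
  · rw [((hmono _ _ hle).eq_of_length hlen.symm)]

variable {q : ℕ → List Labmove} {lm : Labmove}

theorem prefix_of_le_of_succ_eq_cons (hmono : ∀ s t, s ≤ t → pos s <+: pos t) (h0 : q 0 = [])
    (hsucc : ∀ t, q (t + 1) = lm :: pos t) : ∀ s t, s ≤ t → q s <+: q t := by
  rintro (_ | s) (_ | t) hst
  · exact List.prefix_rfl
  · exact h0 ▸ List.nil_prefix
  · omega
  · rw [hsucc, hsucc]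
    exact List.cons_prefix_cons.mpr ⟨rfl, hmono s t (by omega)⟩

theorem spelledGet_succ_of_succ_eq_cons (hmono : ∀ s t, s ≤ t → pos s <+: pos t)
    (h0 : q 0 = []) (hsucc : ∀ t, q (t + 1) = lm :: pos t) (n : ℕ) :
    spelledGet q (n + 1) = spelledGet pos n := Option.ext fun a => by
  rw [spelledGet_eq_some_iff (prefix_of_le_of_succ_eq_cons hmono h0 hsucc),
    spelledGet_eq_some_iff hmono]
  constructor
  · rintro ⟨_ | t, ht⟩
    · simp [h0] at ht
    · exact ⟨t, by simpa [hsucc] using ht⟩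
  · rintro ⟨t, ht⟩
    exact ⟨t + 1, by simpa [hsucc] using ht⟩

theorem spelled_of_succ_eq_cons (hmono : ∀ s t, s ≤ t → pos s <+: pos t) (h0 : q 0 = [])
    (hsucc : ∀ t, q (t + 1) = lm :: pos t) : spelled q = (spelled pos).cons lm := by
  have hqmono := prefix_of_le_of_succ_eq_cons hmono h0 hsucc
  by_cases hb : ∃ t, ∀ s, (pos s).length ≤ (pos t).length
  · obtain ⟨t, ht⟩ := hb
    have hq : ∀ s, (q s).length ≤ (q (t + 1)).length := by
      rintro (_ | s) <;> simp [h0, hsucc, ht]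
    rw [spelled_eq_fin hqmono hq, spelled_eq_fin hmono ht, hsucc]
    rfl
  · have hqb : ¬ ∃ t, ∀ s, (q s).length ≤ (q t).length := by
      rintro ⟨_ | t, ht⟩
      · simpa [h0, hsucc] using ht 1
      · exact hb ⟨t, fun s => by simpa [hsucc] using ht (s + 1)⟩
    have hget_zero : spelledGet q 0 = some lm :=
      (spelledGet_eq_some_iff hqmono).mpr ⟨1, by simp [hsucc]⟩
    simp only [spelled, dif_neg hqb, dif_neg hb, RunT.cons]
    congr 1
    funext n
    cases n with
    | zero => rw [hget_zero]; rfl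
    | succ n => rw [spelledGet_succ_of_succ_eq_cons hmono h0 hsucc]

end Spelled

def BAct.block : BAct → List Move → List Labmove
  | .moves ms, _ => ms.map fun m => ⟨.top, m⟩
  | .permit, env => env.map fun m => ⟨.bot, m⟩
  | .think, _ => []

namespace BMEPM

variable (M : BMEPM) (e : Valuation) (env : ℕ → List Move)

theorem pos_succ (t : ℕ) :
    M.pos e env (t + 1) = M.pos e env t ++ (M.act e (M.pos e env t) t).block (env t) := by
  rw [pos]
  cases M.act e (M.pos e env t) t <;> simp [BAct.block]

theorem pos_prefix_of_le {s t : ℕ} (hst : s ≤ t) : M.pos e env s <+: M.pos e env t :=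
  Nat.rel_of_forall_rel_succ_of_le (· <+: ·)
    (fun t => (M.pos_succ e env t).symm ▸ List.prefix_append _ _) hst

def withOpening (m : Move) (M : BMEPM) : BMEPM where
  act e Φ
    | 0 => .moves [m]
    | t + 1 => M.act e (Φ.drop 1) t

theorem pos_withOpening_succ (m : Move) (t : ℕ) :
    (M.withOpening m).pos e env (t + 1) = ⟨.top, m⟩ :: M.pos e (fun s => env (s + 1)) t := by
  induction t with
  | zero => rfl
  | succ t ih =>
    rw [pos_succ, ih, pos_succ]
    rfl

theorem spelled_pos_withOpening (m : Move) :
    spelled ((M.withOpening m).pos e env) =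
      (spelled (M.pos e fun s => env (s + 1))).cons ⟨.top, m⟩ :=
  spelled_of_succ_eq_cons (fun _ _ => M.pos_prefix_of_le e _) rfl (M.pos_withOpening_succ e env m)

variable {M e env}

theorem Fair.withOpening {m : Move} (h : M.Fair e fun s => env (s + 1)) :
    (M.withOpening m).Fair e env := fun N => by
  obtain ⟨t, ht, hact⟩ := h N
  refine ⟨t + 1, by omega, ?_⟩
  rw [pos_withOpening_succ]
  exact hact

theorem WinsOn.withOpening {m : Move} {A A' : Game} (h : M.WinsOn A e)
    (hill : ∀ Γ, (A e).illegalFor .bot Γ → (A' e).illegalFor .bot (Γ.cons ⟨.top, m⟩))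
    (hwon : ∀ Γ, (A e).wonBy .top Γ → (A' e).wonBy .top (Γ.cons ⟨.top, m⟩)) :
    (M.withOpening m).WinsOn A' e := by
  intro env hlegal
  rw [spelled_pos_withOpening] at hlegal ⊢
  obtain ⟨hfair, hwin⟩ := h (fun s => env (s + 1)) fun hill' => hlegal (hill _ hill')
  exact ⟨hfair.withOpening, hwon _ hwin⟩

end BMEPM

/-- Contraction is uniform-constructively sound. -/
theorem contraction_ucsound : UCSound ContractionRule := by
  refine ⟨fun _ X0 Ms => (Ms.headD ⟨fun _ _ _ => .think⟩).withOpening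
    (.repl (List.replicate (X0.ante.length - 1) true)), ?_⟩
  rintro Xs X0 Ms ⟨E, G, F, rfl, rfl⟩ hlen I e hwins
  obtain ⟨M, rfl⟩ := List.length_eq_one_iff.mp hlen
  have hM : M.WinsOn ((⟨E ++ [G, G], F⟩ : Sequent).game I) e := hwins 0 (by simp) (by simp)
  obtain ⟨T, hG, hconcl, hprem⟩ := Sequent.exists_game_eq_dfb_replicateAt I e E G F
  simp only [List.headD_cons, List.length_append, List.length_singleton, Nat.add_sub_cancel]
  refine hM.withOpening (fun Γ h => ?_) (fun Γ h => ?_)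
  · rw [hconcl]
    rw [hprem] at h
    exact dfb_illegalFor_cons_repl hG h
  · rw [hconcl]
    rw [hprem] at h
    exact dfb_wonBy_top_cons_repl hG h

end

end CoL
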